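/- Let G = (ℂ/ℤ) × (ℂ/ℤ) and let X ⊂ G be the subset X = ({0̄, 1/2̄} × ℂ/ℤ) ∪ (ℂ/ℤ × {0̄, 1/2̄}) ∪ {(μ̄₁, μ̄₂) : μ̄₁ + μ̄₂ ∈ {0̄, 1/2̄}}. Then G cannot be covered by finitely many translated copies of X: for any g₁, …, gₙ ∈ G, ⋃ᵢ (gᵢ + X) ≠ G. -/
import Mathlib


/-- `ℂ/ℤ` -/
abbrev CmodZ := ℂ ⧸ AddSubgroup.zmultiples (1 : ℂ)

/-- projection `ℂ → ℂ/ℤ` -/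
noncomputable def cmk : ℂ → CmodZ := QuotientAddGroup.mk

/-- the singular locus `X ⊂ G = (ℂ/ℤ)²` -/
def Xset : Set (CmodZ × CmodZ) :=
  {p | p.1 = cmk 0 ∨ p.1 = cmk (1 / 2)} ∪
  {p | p.2 = cmk 0 ∨ p.2 = cmk (1 / 2)} ∪
  {p | p.1 + p.2 = cmk 0 ∨ p.1 + p.2 = cmk (1 / 2)}

lemma cmk_I_inj : Function.Injective (fun m : ℕ => cmk (m * Complex.I)) := by
  intro a b h
  have h' : -((a : ℂ) * Complex.I) + (b : ℂ) * Complex.I ∈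
      AddSubgroup.zmultiples (1 : ℂ) := QuotientAddGroup.eq.mp h
  obtain ⟨k, hk⟩ := AddSubgroup.mem_zmultiples_iff.mp h'
  have him := congrArg Complex.im hk
  simp [Complex.add_im, Complex.mul_im] at him
  have : (a:ℝ) = b := by linarith
  exact_mod_cast this

noncomputable instance : Infinite CmodZ := Infinite.of_injective _ cmk_I_inj

theorem stmt7 (n : ℕ) (g : Fin n → CmodZ × CmodZ) :
    (⋃ i : Fin n, (fun x => g i + x) '' Xset) ≠ Set.univ := by
  intro h
  have hA : (⋃ i : Fin n,
      ({(g i).1 + cmk 0, (g i).1 + cmk (1/2)} : Set CmodZ)).Finite :=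
    Set.finite_iUnion fun i => Set.toFinite _
  obtain ⟨x₁, hx₁⟩ := hA.infinite_compl.nonempty
  have hB : (⋃ i : Fin n, ({(g i).2 + cmk 0, (g i).2 + cmk (1/2),
      (g i).1 + (g i).2 + cmk 0 - x₁,
      (g i).1 + (g i).2 + cmk (1/2) - x₁} : Set CmodZ)).Finite :=
    Set.finite_iUnion fun i => Set.toFinite _
  obtain ⟨x₂, hx₂⟩ := hB.infinite_compl.nonempty
  simp only [Set.mem_compl_iff, Set.mem_iUnion, Set.mem_insert_iff,
    Set.mem_singleton_iff, not_exists, not_or] at hx₁ hx₂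
  have hp : (x₁, x₂) ∈ (⋃ i : Fin n, (fun x => g i + x) '' Xset) :=
    h ▸ Set.mem_univ _
  simp only [Set.mem_iUnion, Set.mem_image] at hp
  obtain ⟨i, x, hxX, hgx⟩ := hp
  have h1 : x.1 = x₁ - (g i).1 := by
    have := congrArg Prod.fst hgx
    simp only [Prod.fst_add] at this
    rw [← this]; abel
  have h2 : x.2 = x₂ - (g i).2 := by
    have := congrArg Prod.snd hgx
    simp only [Prod.snd_add] at this
    rw [← this]; abel
  rcases hxX with (hc | hc) | hc <;> simp only [Set.mem_setOf_eq] at hc <;>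
    (try rw [h1] at hc) <;> (try rw [h2] at hc)
  · rcases hc with hc | hc
    · exact (hx₁ i).1 (sub_eq_iff_eq_add'.mp hc)
    · exact (hx₁ i).2 (sub_eq_iff_eq_add'.mp hc)
  · rcases hc with hc | hc
    · exact (hx₂ i).1 (sub_eq_iff_eq_add'.mp hc)
    · exact (hx₂ i).2.1 (sub_eq_iff_eq_add'.mp hc)
  · rcases hc with hc | hc
    · refine (hx₂ i).2.2.1 ?_
      rw [eq_sub_iff_add_eq, ← hc]; abel
    · refine (hx₂ i).2.2.2 ?_
      rw [eq_sub_iff_add_eq, ← hc]; abel
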